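/- Let C be an additive category. Then the sequential completion Ĉ is an additive category and the canonical functor C → Ĉ (sending an object to its constant sequence) is an additive functor. -/

import Mathlib

/-!
An eventually invertible morphism `s : X' ⟶ X` of Cauchy sequences becomes split after
reindexing along a monotone `r ≥ id` growing fast enough: there is `t : X ⟶ X' ∘ r` such that
`s ≫ t` and `t ≫ s ∘ r` are the reindexing maps `X' ⟶ X' ∘ r` and `X ⟶ X ∘ r`, which are
themselves eventually invertible. This gives a left calculus of fractions, so `Ĉ` inherits the
preadditive structure of `Cauch(ℕ, C)` and the localization functor is additive.
Cauchy sequences are closed under finite limits, which are computed pointwise, so `Cauch(ℕ, C)`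
has finite products; an additive essentially surjective functor carries them to finite products
of `Ĉ`, and finite products in a preadditive category are biproducts.
-/


open CategoryTheory CategoryTheory.Limits

universe v u

namespace SeqCompletion

def IsCauchy {C : Type u} [Category.{v} C] (X : ℕ ⥤ C) : Prop :=
  ∀ C' : C, ∃ n : ℕ, ∀ (i j : ℕ), n ≤ i → ∀ (hij : i ≤ j),
    Function.Bijective (fun g : C' ⟶ X.obj i => g ≫ X.map (homOfLE hij))

variable (C : Type u) [Category.{v} C]

abbrev CauchCat := ObjectProperty.FullSubcategory (fun X : ℕ ⥤ C => IsCauchy X)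

def evtInv : MorphismProperty (CauchCat C) := fun X _Y φ =>
  ∀ C' : C, ∃ n : ℕ, ∀ i : ℕ, n ≤ i →
    Function.Bijective (fun g : C' ⟶ X.obj.obj i =>
      g ≫ ((ObjectProperty.ι _).map φ).app i)

/-- The sequential completion `Ĉ = Cauch(ℕ, C)[S⁻¹]`. -/
abbrev Shat := (evtInv C).Localization

/-- The functor `C ⥤ Cauch(ℕ, C)` sending an object to the constant sequence. -/
def constCauchy : C ⥤ CauchCat C :=
  ObjectProperty.lift _ (Functor.const ℕ) (fun X C' =>
    ⟨0, fun i j _ hij => by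
      simp only [Functor.const_obj_obj, Functor.const_obj_map, Category.comp_id]
      exact Function.bijective_id⟩)

variable {C}

theorem evtInv_iff {X Y : CauchCat C} (φ : X ⟶ Y) :
    evtInv C φ ↔ ∀ C' : C, ∀ᶠ i in Filter.atTop,
      Function.Bijective (fun g : C' ⟶ X.obj.obj i => g ≫ φ.hom.app i) :=
  forall_congr' fun _ => Filter.eventually_atTop.symm

variable (C) in
instance evtInv_isMultiplicative : (evtInv C).IsMultiplicative where
  id_mem X C' := ⟨0, fun i _ => by convert Function.bijective_id; simp⟩
  comp_mem f g hf hg := (evtInv_iff _).2 fun C' =>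
    (((evtInv_iff f).1 hf C').and ((evtInv_iff g).1 hg C')).mono fun i ⟨hfi, hgi⟩ => by
      simpa [Function.comp_def] using hgi.comp hfi

theorem map_comp_map_eq_of_thin {J : Type*} [Category J] [Quiver.IsThin J] (F : J ⥤ C)
    {a b b' c : J} (f : a ⟶ b) (g : b ⟶ c) (f' : a ⟶ b') (g' : b' ⟶ c) :
    F.map f ≫ F.map g = F.map f' ≫ F.map g' := by
  rw [← F.map_comp, ← F.map_comp, Subsingleton.elim (f ≫ g) (f' ≫ g')]

def reindex (r : ℕ →o ℕ) (hr : ∀ i, i ≤ r i) : CauchCat C ⥤ CauchCat C where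
  obj X := ⟨r.monotone.functor ⋙ X.obj, fun C' => by
    obtain ⟨n, hn⟩ := X.property C'
    exact ⟨n, fun i j hi hij => hn (r i) (r j) (hi.trans (hr i)) (r.monotone hij)⟩⟩
  map φ := ObjectProperty.homMk (Functor.whiskerLeft _ φ.hom)

def toReindex (r : ℕ →o ℕ) (hr : ∀ i, i ≤ r i) : 𝟭 (CauchCat C) ⟶ reindex r hr where
  app X := ObjectProperty.homMk
    { app i := X.obj.map (homOfLE (hr i))
      naturality _ _ _ := map_comp_map_eq_of_thin X.obj _ _ _ _ }
  naturality X Y φ := by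
    ext i
    exact (φ.hom.naturality (homOfLE (hr i))).symm

theorem evtInv_toReindex_app (r : ℕ →o ℕ) (hr : ∀ i, i ≤ r i) (X : CauchCat C) :
    evtInv C ((toReindex r hr).app X) := fun C' => by
  obtain ⟨n, hn⟩ := X.property C'
  exact ⟨n, fun i hi => hn i (r i) hi (hr i)⟩

theorem exists_reindex_inverse {X' X : CauchCat C} {s : X' ⟶ X} (hs : evtInv C s) :
    ∃ (r : ℕ →o ℕ) (hr : ∀ i, i ≤ r i) (t : X ⟶ (reindex r hr).obj X'),
      s ≫ t = (toReindex r hr).app X' ∧ t ≫ (reindex r hr).map s = (toReindex r hr).app X := by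
  choose N hN using fun i => Filter.eventually_atTop.1
    (((evtInv_iff s).1 hs (X.obj.obj i)).and ((evtInv_iff s).1 hs (X'.obj.obj i)))
  -- `r` is a monotone bound for `id` and for the indices `N i` from which `s` is bijective on maps
  -- out of `X i` and `X' i`.
  let r := partialSups fun i => max i (N i)
  have hr (i : ℕ) : max i (N i) ≤ r i := le_partialSups (fun i => max i (N i)) i
  have hid (i : ℕ) : i ≤ r i := (le_max_left _ _).trans (hr i)
  have hb {i k : ℕ} (hk : r i ≤ k) := hN i k (((le_max_right _ _).trans (hr i)).trans hk)
  let t (i : ℕ) : X.obj.obj i ⟶ X'.obj.obj (r i) :=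
    (Equiv.ofBijective _ (hb le_rfl).1).symm (X.obj.map (homOfLE (hid i)))
  have ht (i : ℕ) : t i ≫ s.hom.app (r i) = X.obj.map (homOfLE (hid i)) :=
    Equiv.ofBijective_apply_symm_apply _ (hb le_rfl).1 _
  refine ⟨r, hid, ObjectProperty.homMk { app := t, naturality := ?_ }, ?_, ?_⟩
  · intro i j f
    apply (hb (r.monotone (leOfHom f))).1.injective
    change (X.obj.map f ≫ t j) ≫ s.hom.app (r j) =
      (t i ≫ X'.obj.map (homOfLE (r.monotone (leOfHom f)))) ≫ s.hom.app (r j)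
    rw [Category.assoc, ht, Category.assoc, s.hom.naturality, ← Category.assoc, ht]
    exact map_comp_map_eq_of_thin X.obj _ _ _ _
  · ext i
    apply (hb le_rfl).2.injective
    change (s.hom.app i ≫ t i) ≫ s.hom.app (r i) = _
    rw [Category.assoc, ht]
    exact (s.hom.naturality _).symm
  · ext i
    exact ht i

instance evtInv_hasLeftCalculusOfFractions : (evtInv C).HasLeftCalculusOfFractions where
  exists_leftFraction X Y φ := by
    obtain ⟨r, hr, t, hst, -⟩ := exists_reindex_inverse φ.hs
    refine ⟨⟨t ≫ (reindex r hr).map φ.f, (toReindex r hr).app Y, evtInv_toReindex_app r hr Y⟩,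
      ?_⟩
    rw [← Category.assoc, hst]
    exact (toReindex r hr).naturality φ.f
  ext X' X Y f₁ f₂ s hs hf := by
    obtain ⟨r, hr, t, -, hts⟩ := exists_reindex_inverse hs
    refine ⟨_, (toReindex r hr).app Y, evtInv_toReindex_app r hr Y, ?_⟩
    have key (f : X ⟶ Y) : f ≫ (toReindex r hr).app Y = t ≫ (reindex r hr).map (s ≫ f) := by
      rw [Functor.map_comp, ← Category.assoc, hts]
      exact (toReindex r hr).naturality f
    rw [key, key, hf]

theorem isCauchy_of_isLimit {J : Type*} [Category J] [Finite J] [HasLimitsOfShape J C]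
    {F : J ⥤ ℕ ⥤ C} {c : Cone F} (hc : IsLimit c) (hF : ∀ k, IsCauchy (F.obj k)) :
    IsCauchy c.pt := by
  intro C'
  choose n hn using fun k => hF k C'
  obtain ⟨m, hm⟩ := Finite.exists_le n
  have hc' (i : ℕ) := isLimitOfPreserves ((evaluation ℕ C).obj i) hc
  refine ⟨m, fun i j hi hij => ?_⟩
  have hb (k : J) := hn k i j ((hm k).trans hi) hij
  have hπ (k : J) : c.pt.map (homOfLE hij) ≫ (c.π.app k).app j =
      (c.π.app k).app i ≫ (F.obj k).map (homOfLE hij) :=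
    (c.π.app k).naturality _
  refine ⟨fun g₁ g₂ h => (hc' i).hom_ext fun k => (hb k).injective ?_, fun g => ?_⟩
  · simp only [Functor.mapCone_π_app, evaluation_obj_map, Category.assoc, ← hπ]
    simp only [← Category.assoc]
    exact congrArg (· ≫ _) h
  · choose a ha using fun k => (hb k).surjective (g ≫ (c.π.app k).app j)
    let cone : Cone (F ⋙ (evaluation ℕ C).obj i) :=
      { pt := C'
        π := { app := a
               naturality k k' u := by
                 apply (hb k').injective
                 dsimp at ha ⊢
                 rw [Category.id_comp, ha, Category.assoc, ← (F.map u).naturality,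
                   ← Category.assoc, ha, Category.assoc, ← NatTrans.comp_app, c.w u] } }
    refine ⟨(hc' i).lift cone, (hc' j).hom_ext fun k => ?_⟩
    have := (hc' i).fac cone k
    dsimp at this ha ⊢
    rw [Category.assoc, hπ, ← Category.assoc, this, ha]

instance isClosedUnderLimitsOfShape_isCauchy (J : Type*) [Category J] [Finite J]
    [HasLimitsOfShape J C] :
    ObjectProperty.IsClosedUnderLimitsOfShape (fun X : ℕ ⥤ C => IsCauchy X) J where
  limitsOfShape_le _ := fun ⟨h⟩ => isCauchy_of_isLimit h.isLimit h.prop_diag_obj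

instance isClosedUnderFiniteProducts_isCauchy [HasFiniteProducts C] :
    ObjectProperty.IsClosedUnderFiniteProducts (fun X : ℕ ⥤ C => IsCauchy X) where
  isClosedUnderLimitsOfShape _ _ := inferInstance

instance constCauchy_additive [Preadditive C] : (constCauchy C).Additive := ⟨rfl⟩

/-- `Ĉ` carries a preadditive structure with finite biproducts (i.e. it is an additive
category) making the canonical functor `C ⥤ Ĉ` additive. -/
theorem shat_additive [Preadditive C] [HasFiniteBiproducts C] :
    ∃ h : Preadditive (Shat C),
      @HasFiniteBiproducts (Shat C) _ (@Preadditive.preadditiveHasZeroMorphisms _ _ h) ∧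
      @Functor.Additive C (Shat C) _ _ _ h (constCauchy C ⋙ (evtInv C).Q) := by
  have : HasFiniteProducts (Shat C) := (evtInv C).Q.hasFiniteProducts_of_additive_of_essSurj
  exact ⟨inferInstance, .of_hasFiniteProducts, inferInstance⟩

end SeqCompletion
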